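/- Let u and ξ be smooth vector fields on ℝ^n and suppose £_ξ u = 0 identically (i.e. the Lie bracket [ξ,u] vanishes). Then the following deviation equation holds pointwise: u^j (u^i ξ^k_{|i})_{|j} = R^k_{ijl} u^i u^j ξ^l + ξ^k_{|j} F^j + u^i u^j (Tξ)^k_{i|j} + (£_ξ F)^k, where F^k := u^i u^k_{|i} and (Tξ)^k_i := T^k_{il} ξ^l is a (1,1)-tensor field. -/

import Mathlib

open scoped BigOperators

noncomputable section

/-- Partial derivative `∂_j f` of a scalar function on `ℝ^n`. -/
def pd {n : ℕ} (j : Fin n) (f : (Fin n → ℝ) → ℝ) (x : Fin n → ℝ) : ℝ :=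
  fderiv ℝ f x (Pi.single j 1)

/-- Covariant derivative of a vector field: `ξ^k_{|j} = ∂_j ξ^k + Γ^k_{mj} ξ^m`. -/
def covV {n : ℕ} (Γ : Fin n → Fin n → Fin n → (Fin n → ℝ) → ℝ)
    (ξ : Fin n → (Fin n → ℝ) → ℝ) (k j : Fin n) (x : Fin n → ℝ) : ℝ :=
  pd j (ξ k) x + ∑ m, Γ k m j x * ξ m x

/-- Covariant derivative of a (1,1)-tensor field:
`A^k_{i|j} = ∂_j A^k_i + Γ^k_{mj} A^m_i − Γ^m_{ij} A^k_m`. -/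
def covT {n : ℕ} (Γ : Fin n → Fin n → Fin n → (Fin n → ℝ) → ℝ)
    (A : Fin n → Fin n → (Fin n → ℝ) → ℝ) (k i j : Fin n) (x : Fin n → ℝ) : ℝ :=
  pd j (A k i) x + ∑ m, Γ k m j x * A m i x - ∑ m, Γ m i j x * A k m x

/-- Curvature tensor
`R^k_{ijl} = ∂_j Γ^k_{il} − ∂_l Γ^k_{ij} + Γ^n_{il} Γ^k_{nj} − Γ^n_{ij} Γ^k_{nl}`. -/
def curv {n : ℕ} (Γ : Fin n → Fin n → Fin n → (Fin n → ℝ) → ℝ)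
    (k i j l : Fin n) (x : Fin n → ℝ) : ℝ :=
  pd j (Γ k i l) x - pd l (Γ k i j) x
    + ∑ m, Γ m i l x * Γ k m j x - ∑ m, Γ m i j x * Γ k m l x

/-- Torsion tensor `T^k_{ij} = Γ^k_{ji} − Γ^k_{ij}`. -/
def tor {n : ℕ} (Γ : Fin n → Fin n → Fin n → (Fin n → ℝ) → ℝ)
    (k i j : Fin n) (x : Fin n → ℝ) : ℝ :=
  Γ k j i x - Γ k i j x

/-- Lie derivative of a vector field: `(£_ξ u)^k = ξ^j ∂_j u^k − u^j ∂_j ξ^k`. -/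
def lieV {n : ℕ} (ξ u : Fin n → (Fin n → ℝ) → ℝ) (k : Fin n) (x : Fin n → ℝ) : ℝ :=
  ∑ j, ξ j x * pd j (u k) x - ∑ j, u j x * pd j (ξ k) x

/-- Lie derivative of a (1,1)-tensor field:
`(£_ξ A)^k_i = ξ^m ∂_m A^k_i − A^m_i ∂_m ξ^k + A^k_m ∂_i ξ^m`. -/
def lieT {n : ℕ} (ξ : Fin n → (Fin n → ℝ) → ℝ)
    (A : Fin n → Fin n → (Fin n → ℝ) → ℝ) (k i : Fin n) (x : Fin n → ℝ) : ℝ :=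
  ∑ m, ξ m x * pd m (A k i) x - ∑ m, A m i x * pd m (ξ k) x
    + ∑ m, A k m x * pd i (ξ m) x

/-- Lie derivative of the connection coefficients:
`£_ξ Γ^k_{ij} = ∂_j ∂_i ξ^k + ξ^m ∂_m Γ^k_{ij} − Γ^m_{ij} ∂_m ξ^k
  + Γ^k_{mj} ∂_i ξ^m + Γ^k_{im} ∂_j ξ^m`. -/
def lieC {n : ℕ} (ξ : Fin n → (Fin n → ℝ) → ℝ)
    (Γ : Fin n → Fin n → Fin n → (Fin n → ℝ) → ℝ)
    (k i j : Fin n) (x : Fin n → ℝ) : ℝ :=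
  pd j (fun y => pd i (ξ k) y) x + ∑ m, ξ m x * pd m (Γ k i j) x
    - ∑ m, Γ m i j x * pd m (ξ k) x + ∑ m, Γ k m j x * pd i (ξ m) x
    + ∑ m, Γ k i m x * pd j (ξ m) x

/-! ### Toolkit: derivative rules for `pd` -/

theorem pd_contDiff {n : ℕ} {f : (Fin n → ℝ) → ℝ} (hf : ContDiff ℝ (⊤ : ℕ∞) f) (j : Fin n) :
    ContDiff ℝ (⊤ : ℕ∞) (pd j f) :=
  (hf.fderiv_right (by simp)).clm_apply contDiff_const

theorem pd_add {n : ℕ} {f g : (Fin n → ℝ) → ℝ} {x : Fin n → ℝ}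
    (hf : DifferentiableAt ℝ f x) (hg : DifferentiableAt ℝ g x) (j : Fin n) :
    pd j (fun y => f y + g y) x = pd j f x + pd j g x := by
  simp [pd, fderiv_fun_add hf hg]

theorem pd_sub {n : ℕ} {f g : (Fin n → ℝ) → ℝ} {x : Fin n → ℝ}
    (hf : DifferentiableAt ℝ f x) (hg : DifferentiableAt ℝ g x) (j : Fin n) :
    pd j (fun y => f y - g y) x = pd j f x - pd j g x := by
  simp [pd, fderiv_fun_sub hf hg]

theorem pd_mul {n : ℕ} {f g : (Fin n → ℝ) → ℝ} {x : Fin n → ℝ}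
    (hf : DifferentiableAt ℝ f x) (hg : DifferentiableAt ℝ g x) (j : Fin n) :
    pd j (fun y => f y * g y) x = pd j f x * g x + f x * pd j g x := by
  simp [pd, fderiv_fun_mul hf hg]; ring

theorem pd_sum {n : ℕ} {ι : Type*} (s : Finset ι) {f : ι → (Fin n → ℝ) → ℝ} {x : Fin n → ℝ}
    (hf : ∀ i ∈ s, DifferentiableAt ℝ (f i) x) (j : Fin n) :
    pd j (fun y => ∑ i ∈ s, f i y) x = ∑ i ∈ s, pd j (f i) x := by
  simp [pd, fderiv_fun_sum hf]

theorem pd_zero {n : ℕ} (j : Fin n) (x : Fin n → ℝ) :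
    pd j (fun _ => (0 : ℝ)) x = 0 := by
  simp [pd]

theorem pd_comm {n : ℕ} {f : (Fin n → ℝ) → ℝ} (hf : ContDiff ℝ (⊤ : ℕ∞) f) (x : Fin n → ℝ)
    (i j : Fin n) : pd j (pd i f) x = pd i (pd j f) x := by
  have h1 : ∀ y, HasFDerivAt f (fderiv ℝ f y) y := fun y =>
    (hf.differentiable (by simp) y).hasFDerivAt
  have h2 : HasFDerivAt (fderiv ℝ f) (fderiv ℝ (fderiv ℝ f) x) x :=
    ((hf.fderiv_right (m := (⊤ : ℕ∞)) (by simp)).differentiable (by simp) x).hasFDerivAt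
  have key : ∀ (v : Fin n → ℝ) (l : Fin n), pd l (fun y => fderiv ℝ f y v) x
      = fderiv ℝ (fderiv ℝ f) x (Pi.single l 1) v := by
    intro v l
    have h3 : HasFDerivAt (fun y => (ContinuousLinearMap.apply ℝ ℝ v) (fderiv ℝ f y))
        ((ContinuousLinearMap.apply ℝ ℝ v).comp (fderiv ℝ (fderiv ℝ f) x)) x :=
      (ContinuousLinearMap.apply ℝ ℝ v).hasFDerivAt.comp x h2
    have h4 : HasFDerivAt (fun y => fderiv ℝ f y v)
        (((ContinuousLinearMap.apply ℝ ℝ v).comp (fderiv ℝ (fderiv ℝ f) x))) x := h3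
    simp only [pd]
    rw [h4.fderiv]
    rfl
  have hs := second_derivative_symmetric h1 h2 (Pi.single i 1) (Pi.single j 1)
  calc pd j (pd i f) x = fderiv ℝ (fderiv ℝ f) x (Pi.single j 1) (Pi.single i 1) :=
        key (Pi.single i 1) j
    _ = fderiv ℝ (fderiv ℝ f) x (Pi.single i 1) (Pi.single j 1) := hs.symm
    _ = pd i (pd j f) x := (key (Pi.single j 1) i).symm

/-! ### Toolkit: finite sum manipulation -/

section helpers
variable {n : ℕ}
theorem congr1' (f g : Fin n → ℝ) (h : ∀ a, f a = g a) : ∑ a, f a = ∑ a, g a :=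
  Finset.sum_congr rfl fun a _ => h a
theorem congr2' (f g : Fin n → Fin n → ℝ) (h : ∀ a b, f a b = g a b) :
    ∑ a, ∑ b, f a b = ∑ a, ∑ b, g a b :=
  Finset.sum_congr rfl fun a _ => Finset.sum_congr rfl fun b _ => h a b
theorem congr3' (f g : Fin n → Fin n → Fin n → ℝ) (h : ∀ a b c, f a b c = g a b c) :
    ∑ a, ∑ b, ∑ c, f a b c = ∑ a, ∑ b, ∑ c, g a b c :=
  Finset.sum_congr rfl fun a _ => Finset.sum_congr rfl fun b _ =>
    Finset.sum_congr rfl fun c _ => h a b c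
theorem swap2 (f : Fin n → Fin n → ℝ) :
    ∑ a, ∑ b, f a b = ∑ a, ∑ b, f b a := Finset.sum_comm
theorem swap12 (f : Fin n → Fin n → Fin n → ℝ) :
    ∑ a, ∑ b, ∑ c, f a b c = ∑ a, ∑ b, ∑ c, f b a c := Finset.sum_comm
theorem swap23 (f : Fin n → Fin n → Fin n → ℝ) :
    ∑ a, ∑ b, ∑ c, f a b c = ∑ a, ∑ b, ∑ c, f a c b :=
  Finset.sum_congr rfl fun _ _ => Finset.sum_comm
theorem cyc3 (f : Fin n → Fin n → Fin n → ℝ) :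
    ∑ a, ∑ b, ∑ c, f a b c = ∑ a, ∑ b, ∑ c, f b c a :=
  (swap23 f).trans (swap12 (fun a b c => f a c b))
theorem cyc3' (f : Fin n → Fin n → Fin n → ℝ) :
    ∑ a, ∑ b, ∑ c, f a b c = ∑ a, ∑ b, ∑ c, f c a b :=
  (swap12 f).trans (swap23 (fun a b c => f b a c))
theorem rev3 (f : Fin n → Fin n → Fin n → ℝ) :
    ∑ a, ∑ b, ∑ c, f a b c = ∑ a, ∑ b, ∑ c, f c b a :=
  (swap12 f).trans ((swap23 (fun a b c => f b a c)).trans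
    (swap12 (fun a b c => f c a b)))
end helpers

/-! ### The three algebraic identities -/

theorem alg_leib {n : ℕ} (k : Fin n) (U : Fin n → ℝ) (dU S P : Fin n → Fin n → ℝ)
    (G : Fin n → Fin n → Fin n → ℝ) :
    ∑ j, U j * ((∑ i, (dU j i * S k i + U i * P i j)) + ∑ m, G k m j * ∑ i, U i * S m i)
    = ∑ j, S k j * (∑ i, U i * (dU i j + ∑ m, G j m i * U m))
      + ∑ i, ∑ j, U i * U j * (P i j + (∑ m, G k m j * S m i) - ∑ m, G m i j * S k m) := by
  simp only [Finset.mul_sum, Finset.sum_mul, mul_add, add_mul, mul_sub, sub_mul,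
    Finset.sum_add_distrib, Finset.sum_sub_distrib]
  have h1 : ∑ a : Fin n, ∑ b : Fin n, U a * (dU a b * S k b)
      = ∑ a : Fin n, ∑ b : Fin n, S k a * (U b * dU b a) :=
    (swap2 _).trans (congr2' _ _ fun a b => by ring)
  have h2 : ∑ a : Fin n, ∑ b : Fin n, U a * (U b * P b a)
      = ∑ a : Fin n, ∑ b : Fin n, U a * U b * P a b :=
    (swap2 _).trans (congr2' _ _ fun a b => by ring)
  have h3 : ∑ a : Fin n, ∑ b : Fin n, ∑ c : Fin n, U a * (G k b a * (U c * S b c))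
      = ∑ a : Fin n, ∑ b : Fin n, ∑ c : Fin n, U a * U b * (G k c b * S c a) :=
    (cyc3 _).trans (congr3' _ _ fun a b c => by ring)
  have h4 : ∑ a : Fin n, ∑ b : Fin n, ∑ c : Fin n, S k a * (U b * (G a c b * U c))
      = ∑ a : Fin n, ∑ b : Fin n, ∑ c : Fin n, U a * U b * (G c a b * S k c) :=
    (rev3 _).trans (congr3' _ _ fun a b c => by ring)
  linear_combination h1 + h2 + h3 - h4

theorem alg_B {n : ℕ} (k i j : Fin n) (D : ℝ) (X : Fin n → ℝ) (dX : Fin n → Fin n → ℝ)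
    (G : Fin n → Fin n → Fin n → ℝ) (dG : Fin n → Fin n → Fin n → Fin n → ℝ) :
    (D + ∑ m, (dG j k m i * X m + G k m i * dX j m))
      + ∑ m, G k m j * (dX i m + ∑ p, G m p i * X p)
      - ∑ m, G m i j * (dX m k + ∑ p, G k p m * X p)
    = (D + ∑ m, X m * dG m k i j - ∑ m, G m i j * dX m k
        + ∑ m, G k m j * dX i m + ∑ m, G k i m * dX j m)
      + (∑ l, (dG j k i l - dG l k i j + ∑ m, G m i l * G k m j - ∑ m, G m i j * G k m l) * X l)
      + ((∑ l, ((dG j k l i - dG j k i l) * X l + (G k l i - G k i l) * dX j l))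
          + ∑ m, G k m j * (∑ l, (G m l i - G m i l) * X l)
          - ∑ m, G m i j * (∑ l, (G k l m - G k m l) * X l)) := by
  simp only [Finset.mul_sum, Finset.sum_mul, mul_add, add_mul, mul_sub, sub_mul,
    Finset.sum_add_distrib, Finset.sum_sub_distrib]
  have hc : ∑ a : Fin n, ∑ b : Fin n, G b i a * G k b j * X a
      = ∑ a : Fin n, ∑ b : Fin n, G k a j * (G a i b * X b) :=
    (swap2 _).trans (congr2' _ _ fun a b => by ring)
  have hd : ∑ a : Fin n, ∑ b : Fin n, G b i j * G k b a * X a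
      = ∑ a : Fin n, ∑ b : Fin n, G a i j * (G k a b * X b) :=
    (swap2 _).trans (congr2' _ _ fun a b => by ring)
  have e1 : ∑ m : Fin n, X m * dG m k i j = ∑ m : Fin n, dG m k i j * X m :=
    Finset.sum_congr rfl fun m _ => by ring
  linear_combination hd - hc - e1

theorem alg_A {n : ℕ} (k : Fin n) (X U : Fin n → ℝ) (dX dU : Fin n → Fin n → ℝ)
    (ddX ddU : Fin n → Fin n → Fin n → ℝ)
    (G : Fin n → Fin n → Fin n → ℝ) (dG : Fin n → Fin n → Fin n → Fin n → ℝ)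
    (hH : ∀ c : Fin n, ∑ a, X a * dU a c = ∑ a, U a * dX a c)
    (hH' : ∀ l c : Fin n, ∑ a, (dX l a * dU a c + X a * ddU l a c)
        = ∑ a, (dU l a * dX a c + U a * ddX l a c))
    (hsU : ∀ a b c, ddU a b c = ddU b a c) :
    ∑ m, X m * (∑ i, (dU m i * (dU i k + ∑ p, G k p i * U p)
        + U i * (ddU m i k + ∑ p, (dG m k p i * U p + G k p i * dU m p))))
      - ∑ m, (∑ i, U i * (dU i m + ∑ p, G m p i * U p)) * dX m k
    = ∑ i, ∑ j, U i * U j *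
        (ddX j i k + ∑ m, X m * dG m k i j - ∑ m, G m i j * dX m k
          + ∑ m, G k m j * dX i m + ∑ m, G k i m * dX j m) := by
  simp only [Finset.mul_sum, Finset.sum_mul, mul_add, add_mul, mul_sub, sub_mul,
    Finset.sum_add_distrib, Finset.sum_sub_distrib]
  have hL4 : ∑ a : Fin n, ∑ b : Fin n, ∑ c : Fin n, X a * (U b * (dG a k c b * U c))
      = ∑ a : Fin n, ∑ b : Fin n, ∑ c : Fin n, U a * U b * (X c * dG c k a b) :=
    (rev3 _).trans (congr3' _ _ fun a b c => by ring)
  have hL7 : ∑ a : Fin n, ∑ b : Fin n, ∑ c : Fin n, U b * (G a c b * U c) * dX a k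
      = ∑ a : Fin n, ∑ b : Fin n, ∑ c : Fin n, U a * U b * (G c a b * dX c k) :=
    (rev3 _).trans (congr3' _ _ fun a b c => by ring)
  have hL2 : ∑ a : Fin n, ∑ b : Fin n, ∑ c : Fin n, X a * (dU a b * (G k c b * U c))
      = ∑ a : Fin n, ∑ b : Fin n, ∑ c : Fin n, U a * U b * (G k a c * dX b c) := by
    calc ∑ a : Fin n, ∑ b : Fin n, ∑ c : Fin n, X a * (dU a b * (G k c b * U c))
        = ∑ a : Fin n, ∑ b : Fin n, ∑ c : Fin n, (X c * dU c a) * (G k b a * U b) :=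
          (cyc3' _).trans (congr3' _ _ fun a b c => by ring)
      _ = ∑ a : Fin n, ∑ b : Fin n, (∑ c : Fin n, X c * dU c a) * (G k b a * U b) :=
          congr2' _ _ fun a b => (Finset.sum_mul _ _ _).symm
      _ = ∑ a : Fin n, ∑ b : Fin n, (∑ c : Fin n, U c * dX c a) * (G k b a * U b) :=
          congr2' _ _ fun a b => by rw [hH a]
      _ = ∑ a : Fin n, ∑ b : Fin n, ∑ c : Fin n, (U c * dX c a) * (G k b a * U b) :=
          congr2' _ _ fun a b => Finset.sum_mul _ _ _
      _ = ∑ a : Fin n, ∑ b : Fin n, ∑ c : Fin n, U a * U b * (G k a c * dX b c) :=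
          (cyc3' _).trans (congr3' _ _ fun a b c => by ring)
  have hL5 : ∑ a : Fin n, ∑ b : Fin n, ∑ c : Fin n, X a * (U b * (G k c b * dU a c))
      = ∑ a : Fin n, ∑ b : Fin n, ∑ c : Fin n, U a * U b * (G k c b * dX a c) := by
    calc ∑ a : Fin n, ∑ b : Fin n, ∑ c : Fin n, X a * (U b * (G k c b * dU a c))
        = ∑ a : Fin n, ∑ b : Fin n, ∑ c : Fin n, (X c * dU c b) * (U a * G k b a) :=
          (cyc3' _).trans (congr3' _ _ fun a b c => by ring)
      _ = ∑ a : Fin n, ∑ b : Fin n, (∑ c : Fin n, X c * dU c b) * (U a * G k b a) :=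
          congr2' _ _ fun a b => (Finset.sum_mul _ _ _).symm
      _ = ∑ a : Fin n, ∑ b : Fin n, (∑ c : Fin n, U c * dX c b) * (U a * G k b a) :=
          congr2' _ _ fun a b => by rw [hH b]
      _ = ∑ a : Fin n, ∑ b : Fin n, ∑ c : Fin n, (U c * dX c b) * (U a * G k b a) :=
          congr2' _ _ fun a b => Finset.sum_mul _ _ _
      _ = ∑ a : Fin n, ∑ b : Fin n, ∑ c : Fin n, U a * U b * (G k c b * dX a c) :=
          (cyc3 _).trans (congr3' _ _ fun a b c => by ring)
  have hL1 : ∑ a : Fin n, ∑ b : Fin n, X a * (dU a b * dU b k)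
      = ∑ a : Fin n, ∑ b : Fin n, U a * (dX a b * dU b k) := by
    calc ∑ a : Fin n, ∑ b : Fin n, X a * (dU a b * dU b k)
        = ∑ a : Fin n, ∑ b : Fin n, (X b * dU b a) * dU a k :=
          (swap2 _).trans (congr2' _ _ fun a b => by ring)
      _ = ∑ a : Fin n, (∑ b : Fin n, X b * dU b a) * dU a k :=
          congr1' _ _ fun a => (Finset.sum_mul _ _ _).symm
      _ = ∑ a : Fin n, (∑ b : Fin n, U b * dX b a) * dU a k :=
          congr1' _ _ fun a => by rw [hH a]
      _ = ∑ a : Fin n, ∑ b : Fin n, (U b * dX b a) * dU a k :=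
          congr1' _ _ fun a => Finset.sum_mul _ _ _
      _ = ∑ a : Fin n, ∑ b : Fin n, U a * (dX a b * dU b k) :=
          (swap2 _).trans (congr2' _ _ fun a b => by ring)
  have hL3 : ∑ a : Fin n, ∑ b : Fin n, X a * (U b * ddU a b k)
      = ∑ a : Fin n, ∑ b : Fin n, U a * (dU a b * dX b k)
        + ∑ a : Fin n, ∑ b : Fin n, U a * U b * ddX b a k
        - ∑ a : Fin n, ∑ b : Fin n, U a * (dX a b * dU b k) := by
    have key : ∀ a, ∑ b : Fin n, X b * ddU a b k
        = ∑ b : Fin n, dU a b * dX b k + ∑ b : Fin n, U b * ddX a b k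
          - ∑ b : Fin n, dX a b * dU b k := by
      intro a
      have h := hH' a k
      rw [Finset.sum_add_distrib, Finset.sum_add_distrib] at h
      linarith
    calc ∑ a : Fin n, ∑ b : Fin n, X a * (U b * ddU a b k)
        = ∑ a : Fin n, ∑ b : Fin n, U a * (X b * ddU a b k) :=
          (swap2 _).trans (congr2' _ _ fun a b => by rw [hsU b a k]; ring)
      _ = ∑ a : Fin n, U a * (∑ b : Fin n, X b * ddU a b k) :=
          congr1' _ _ fun a => (Finset.mul_sum _ _ _).symm
      _ = ∑ a : Fin n, U a * (∑ b : Fin n, dU a b * dX b k + ∑ b : Fin n, U b * ddX a b k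
            - ∑ b : Fin n, dX a b * dU b k) :=
          congr1' _ _ fun a => by rw [key a]
      _ = ∑ a : Fin n, (U a * ∑ b : Fin n, dU a b * dX b k
            + U a * ∑ b : Fin n, U b * ddX a b k - U a * ∑ b : Fin n, dX a b * dU b k) :=
          congr1' _ _ fun a => by ring
      _ = ∑ a : Fin n, ∑ b : Fin n, U a * (dU a b * dX b k)
            + ∑ a : Fin n, ∑ b : Fin n, U a * (U b * ddX a b k)
            - ∑ a : Fin n, ∑ b : Fin n, U a * (dX a b * dU b k) := by
          rw [Finset.sum_sub_distrib, Finset.sum_add_distrib]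
          congr 1; congr 1
          · exact congr1' _ _ fun a => by rw [Finset.mul_sum]
          · exact congr1' _ _ fun a => by rw [Finset.mul_sum]
          · exact congr1' _ _ fun a => by rw [Finset.mul_sum]
      _ = ∑ a : Fin n, ∑ b : Fin n, U a * (dU a b * dX b k)
            + ∑ a : Fin n, ∑ b : Fin n, U a * U b * ddX b a k
            - ∑ a : Fin n, ∑ b : Fin n, U a * (dX a b * dU b k) := by
          rw [(swap2 fun a b => U a * (U b * ddX a b k)).trans
            (congr2' _ _ fun a b => by ring : ∑ a : Fin n, ∑ b : Fin n, U b * (U a * ddX b a k)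
              = ∑ a : Fin n, ∑ b : Fin n, U a * U b * ddX b a k)]
  have hL6 : ∑ a : Fin n, ∑ b : Fin n, U b * dU b a * dX a k
      = ∑ a : Fin n, ∑ b : Fin n, U a * (dU a b * dX b k) :=
    (swap2 _).trans (congr2' _ _ fun a b => by ring)
  linear_combination hL1 + hL2 + hL3 + hL4 + hL5 - hL6 - hL7

/-! ### Analytic glue -/

section glue
variable {n : ℕ} (Γ : Fin n → Fin n → Fin n → (Fin n → ℝ) → ℝ)
  (u ξ : Fin n → (Fin n → ℝ) → ℝ)

theorem smooth_covV (hΓ : ∀ k i j, ContDiff ℝ (⊤ : ℕ∞) (Γ k i j))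
    (hv : ∀ k, ContDiff ℝ (⊤ : ℕ∞) (ξ k)) (a b : Fin n) :
    ContDiff ℝ (⊤ : ℕ∞) (fun y => covV Γ ξ a b y) :=
  (pd_contDiff (hv a) b).add (ContDiff.sum fun m _ => (hΓ a m b).mul (hv m))

theorem smooth_Tξ (hΓ : ∀ k i j, ContDiff ℝ (⊤ : ℕ∞) (Γ k i j))
    (hv : ∀ k, ContDiff ℝ (⊤ : ℕ∞) (ξ k)) (a b : Fin n) :
    ContDiff ℝ (⊤ : ℕ∞) (fun y => ∑ l, tor Γ a b l y * ξ l y) :=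
  ContDiff.sum fun l _ => (((hΓ a l b).sub (hΓ a b l)).mul (hv l))

/-- pointwise expansion of `pd` of `covV`. -/
theorem pd_covV (hΓ : ∀ k i j, ContDiff ℝ (⊤ : ℕ∞) (Γ k i j))
    (hξ : ∀ k, ContDiff ℝ (⊤ : ℕ∞) (ξ k)) (x : Fin n → ℝ) (m a b : Fin n) :
    pd m (fun y => covV Γ ξ a b y) x
      = pd m (pd b (ξ a)) x
        + ∑ p, (pd m (Γ a p b) x * ξ p x + Γ a p b x * pd m (ξ p) x) := by
  have e : (fun y => covV Γ ξ a b y)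
      = fun y => pd b (ξ a) y + ∑ p, Γ a p b y * ξ p y := rfl
  rw [e, pd_add ((pd_contDiff (hξ a) b).differentiable (by simp) x)
    ((ContDiff.sum fun p _ => (hΓ a p b).mul (hξ p) :
      ContDiff ℝ (⊤ : ℕ∞) fun y => ∑ p, Γ a p b y * ξ p y).differentiable (by simp) x) m,
    pd_sum _ (fun p _ => ((hΓ a p b).differentiable (by simp) x).fun_mul
      ((hξ p).differentiable (by simp) x)) m]
  exact congr_arg _ (congr1' _ _ fun p => pd_mul ((hΓ a p b).differentiable (by simp) x)
    ((hξ p).differentiable (by simp) x) m)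

/-- Step B : Ricci/Yano identity. -/
theorem stepB (hΓ : ∀ k i j, ContDiff ℝ (⊤ : ℕ∞) (Γ k i j))
    (hξ : ∀ k, ContDiff ℝ (⊤ : ℕ∞) (ξ k)) (x : Fin n → ℝ) (k i j : Fin n) :
    covT Γ (fun a b y => covV Γ ξ a b y) k i j x
      = lieC ξ Γ k i j x + (∑ l, curv Γ k i j l x * ξ l x)
        + covT Γ (fun a b y => ∑ l, tor Γ a b l y * ξ l y) k i j x := by
  have h2 : pd j (fun y => ∑ l, tor Γ k i l y * ξ l y) x
      = ∑ l, ((pd j (Γ k l i) x - pd j (Γ k i l) x) * ξ l x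
          + (Γ k l i x - Γ k i l x) * pd j (ξ l) x) := by
    have e : (fun y => ∑ l, tor Γ k i l y * ξ l y)
        = fun y => ∑ l, (Γ k l i y - Γ k i l y) * ξ l y := rfl
    rw [e, pd_sum _ (fun l _ => (((hΓ k l i).sub (hΓ k i l)).differentiable (by simp) x).fun_mul
      ((hξ l).differentiable (by simp) x)) j]
    exact congr1' _ _ fun l => by
      rw [pd_mul (((hΓ k l i).sub (hΓ k i l)).differentiable (by simp) x)
        ((hξ l).differentiable (by simp) x) j,
        pd_sub ((hΓ k l i).differentiable (by simp) x) ((hΓ k i l).differentiable (by simp) x) j]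
  have lhs_eq : covT Γ (fun a b y => covV Γ ξ a b y) k i j x
      = (pd j (pd i (ξ k)) x
          + ∑ p, (pd j (Γ k p i) x * ξ p x + Γ k p i x * pd j (ξ p) x))
        + ∑ m, Γ k m j x * (pd i (ξ m) x + ∑ p, Γ m p i x * ξ p x)
        - ∑ m, Γ m i j x * (pd m (ξ k) x + ∑ p, Γ k p m x * ξ p x) := by
    have e : covT Γ (fun a b y => covV Γ ξ a b y) k i j x
        = pd j (fun y => covV Γ ξ k i y) x
          + ∑ m, Γ k m j x * (pd i (ξ m) x + ∑ p, Γ m p i x * ξ p x)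
          - ∑ m, Γ m i j x * (pd m (ξ k) x + ∑ p, Γ k p m x * ξ p x) := rfl
    rw [e, pd_covV Γ ξ hΓ hξ x j k i]
  rw [lhs_eq]
  have rhs2 : covT Γ (fun a b y => ∑ l, tor Γ a b l y * ξ l y) k i j x
      = (∑ l, ((pd j (Γ k l i) x - pd j (Γ k i l) x) * ξ l x
            + (Γ k l i x - Γ k i l x) * pd j (ξ l) x))
        + ∑ m, Γ k m j x * (∑ l, (Γ m l i x - Γ m i l x) * ξ l x)
        - ∑ m, Γ m i j x * (∑ l, (Γ k l m x - Γ k m l x) * ξ l x) := by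
    have e : covT Γ (fun a b y => ∑ l, tor Γ a b l y * ξ l y) k i j x
        = pd j (fun y => ∑ l, tor Γ k i l y * ξ l y) x
          + ∑ m, Γ k m j x * (∑ l, (Γ m l i x - Γ m i l x) * ξ l x)
          - ∑ m, Γ m i j x * (∑ l, (Γ k l m x - Γ k m l x) * ξ l x) := rfl
    rw [e, h2]
  rw [rhs2]
  exact alg_B k i j (pd j (pd i (ξ k)) x) (fun a => ξ a x) (fun a b => pd a (ξ b) x)
    (fun a b c => Γ a b c x) (fun l a b c => pd l (Γ a b c) x)

/-- Step Leibniz. -/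
theorem stepLeib (hΓ : ∀ k i j, ContDiff ℝ (⊤ : ℕ∞) (Γ k i j))
    (hu : ∀ k, ContDiff ℝ (⊤ : ℕ∞) (u k)) (hξ : ∀ k, ContDiff ℝ (⊤ : ℕ∞) (ξ k))
    (x : Fin n → ℝ) (k : Fin n) :
    ∑ j, u j x * covV Γ (fun a y => ∑ i, u i y * covV Γ ξ a i y) k j x
      = ∑ j, covV Γ ξ k j x * (∑ i, u i x * covV Γ u j i x)
        + ∑ i, ∑ j, u i x * u j x *
            covT Γ (fun a b y => covV Γ ξ a b y) k i j x := by
  have hpdA : ∀ jj : Fin n, pd jj (fun y => ∑ i, u i y * covV Γ ξ k i y) x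
      = ∑ i, (pd jj (u i) x * covV Γ ξ k i x
          + u i x * pd jj (fun y => covV Γ ξ k i y) x) := by
    intro jj
    rw [pd_sum _ (fun i _ => ((hu i).differentiable (by simp) x).fun_mul
      ((smooth_covV Γ ξ hΓ hξ k i).differentiable (by simp) x)) jj]
    exact congr1' _ _ fun i => pd_mul ((hu i).differentiable (by simp) x)
      ((smooth_covV Γ ξ hΓ hξ k i).differentiable (by simp) x) jj
  have e1 : ∑ j, u j x * covV Γ (fun a y => ∑ i, u i y * covV Γ ξ a i y) k j x
      = ∑ j, u j x * ((∑ i, (pd j (u i) x * covV Γ ξ k i x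
            + u i x * pd j (fun y => covV Γ ξ k i y) x))
          + ∑ m, Γ k m j x * (∑ i, u i x * covV Γ ξ m i x)) := by
    refine congr1' _ _ fun j => ?_
    have e : covV Γ (fun a y => ∑ i, u i y * covV Γ ξ a i y) k j x
        = pd j (fun y => ∑ i, u i y * covV Γ ξ k i y) x
          + ∑ m, Γ k m j x * (∑ i, u i x * covV Γ ξ m i x) := rfl
    rw [e, hpdA j]
  rw [e1]
  exact alg_leib k (fun a => u a x) (fun a b => pd a (u b) x)
    (fun a b => covV Γ ξ a b x) (fun i j => pd j (fun y => covV Γ ξ k i y) x)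
    (fun a b c => Γ a b c x)

/-- Step A : Lie derivative of `F` equals `u u £Γ`. -/
theorem stepA (hΓ : ∀ k i j, ContDiff ℝ (⊤ : ℕ∞) (Γ k i j))
    (hu : ∀ k, ContDiff ℝ (⊤ : ℕ∞) (u k)) (hξ : ∀ k, ContDiff ℝ (⊤ : ℕ∞) (ξ k))
    (hlie : ∀ (x : Fin n → ℝ) (k : Fin n), lieV ξ u k x = 0)
    (x : Fin n → ℝ) (k : Fin n) :
    lieV ξ (fun a y => ∑ i, u i y * covV Γ u a i y) k x
      = ∑ i, ∑ j, u i x * u j x * lieC ξ Γ k i j x := by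
  have hH : ∀ c : Fin n, ∑ a, ξ a x * pd a (u c) x = ∑ a, u a x * pd a (ξ c) x :=
    fun c => sub_eq_zero.mp (hlie x c)
  have hexp : ∀ (v w : Fin n → (Fin n → ℝ) → ℝ), (∀ a, ContDiff ℝ (⊤ : ℕ∞) (v a)) →
      (∀ a, ContDiff ℝ (⊤ : ℕ∞) (w a)) → ∀ (l c : Fin n),
      pd l (fun y => ∑ a, v a y * pd a (w c) y) x
        = ∑ a, (pd l (v a) x * pd a (w c) x + v a x * pd l (pd a (w c)) x) := by
    intro v w hv hw l c
    rw [pd_sum _ (fun a _ => ((hv a).differentiable (by simp) x).fun_mul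
      ((pd_contDiff (hw c) a).differentiable (by simp) x)) l]
    exact congr1' _ _ fun a => pd_mul ((hv a).differentiable (by simp) x)
      ((pd_contDiff (hw c) a).differentiable (by simp) x) l
  have hH' : ∀ l c : Fin n,
      ∑ a, (pd l (ξ a) x * pd a (u c) x + ξ a x * pd l (pd a (u c)) x)
        = ∑ a, (pd l (u a) x * pd a (ξ c) x + u a x * pd l (pd a (ξ c)) x) := by
    intro l c
    have hz : pd l (fun y => lieV ξ u c y) x = 0 := by
      rw [show (fun y => lieV ξ u c y) = fun _ => (0 : ℝ) from funext fun y => hlie y c]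
      exact pd_zero l x
    have hd1 : DifferentiableAt ℝ (fun y => ∑ a, ξ a y * pd a (u c) y) x :=
      ((ContDiff.sum fun a _ => (hξ a).mul (pd_contDiff (hu c) a) :
        ContDiff ℝ (⊤ : ℕ∞) fun y => ∑ a, ξ a y * pd a (u c) y).differentiable (by simp) x)
    have hd2 : DifferentiableAt ℝ (fun y => ∑ a, u a y * pd a (ξ c) y) x :=
      ((ContDiff.sum fun a _ => (hu a).mul (pd_contDiff (hξ c) a) :
        ContDiff ℝ (⊤ : ℕ∞) fun y => ∑ a, u a y * pd a (ξ c) y).differentiable (by simp) x)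
    have e0 : pd l (fun y => lieV ξ u c y) x
        = pd l (fun y => ∑ a, ξ a y * pd a (u c) y) x
          - pd l (fun y => ∑ a, u a y * pd a (ξ c) y) x := pd_sub hd1 hd2 l
    rw [e0, hexp ξ u hξ hu l c, hexp u ξ hu hξ l c] at hz
    linarith
  have hsU : ∀ a b c : Fin n, pd a (pd b (u c)) x = pd b (pd a (u c)) x :=
    fun a b c => pd_comm (hu c) x b a
  have hpdS : ∀ m a b : Fin n, pd m (fun y => covV Γ u a b y) x
      = pd m (pd b (u a)) x
        + ∑ p, (pd m (Γ a p b) x * u p x + Γ a p b x * pd m (u p) x) :=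
    fun m a b => pd_covV Γ u hΓ hu x m a b
  have hpdF : ∀ m : Fin n, pd m (fun y => ∑ i, u i y * covV Γ u k i y) x
      = ∑ i, (pd m (u i) x * (pd i (u k) x + ∑ p, Γ k p i x * u p x)
          + u i x * (pd m (pd i (u k)) x
            + ∑ p, (pd m (Γ k p i) x * u p x + Γ k p i x * pd m (u p) x))) := by
    intro m
    rw [pd_sum _ (fun i _ => ((hu i).differentiable (by simp) x).fun_mul
      ((smooth_covV Γ u hΓ hu k i).differentiable (by simp) x)) m]
    refine congr1' _ _ fun i => ?_
    rw [pd_mul ((hu i).differentiable (by simp) x)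
      ((smooth_covV Γ u hΓ hu k i).differentiable (by simp) x) m, hpdS m k i]
    rfl
  have e1 : ∑ m, ξ m x * pd m (fun y => ∑ i, u i y * covV Γ u k i y) x
      = ∑ m, ξ m x * (∑ i, (pd m (u i) x * (pd i (u k) x + ∑ p, Γ k p i x * u p x)
          + u i x * (pd m (pd i (u k)) x
            + ∑ p, (pd m (Γ k p i) x * u p x + Γ k p i x * pd m (u p) x)))) :=
    congr1' _ _ fun m => by rw [hpdF m]
  calc lieV ξ (fun a y => ∑ i, u i y * covV Γ u a i y) k x
      = ∑ m, ξ m x * pd m (fun y => ∑ i, u i y * covV Γ u k i y) x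
        - ∑ m, (∑ i, u i x * (pd i (u m) x + ∑ p, Γ m p i x * u p x)) * pd m (ξ k) x := rfl
    _ = ∑ m, ξ m x * (∑ i, (pd m (u i) x * (pd i (u k) x + ∑ p, Γ k p i x * u p x)
          + u i x * (pd m (pd i (u k)) x
            + ∑ p, (pd m (Γ k p i) x * u p x + Γ k p i x * pd m (u p) x))))
        - ∑ m, (∑ i, u i x * (pd i (u m) x + ∑ p, Γ m p i x * u p x)) * pd m (ξ k) x := by
        rw [e1]
    _ = ∑ i, ∑ j, u i x * u j x * lieC ξ Γ k i j x :=
        alg_A k (fun a => ξ a x) (fun a => u a x) (fun a b => pd a (ξ b) x)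
          (fun a b => pd a (u b) x) (fun a b c => pd a (pd b (ξ c)) x)
          (fun a b c => pd a (pd b (u c)) x) (fun a b c => Γ a b c x)
          (fun l a b c => pd l (Γ a b c) x) hH hH' hsU

end glue

/-- deviation equation under `£_ξ u = 0`:
`u^j (u^i ξ^k_{|i})_{|j} = R^k_{ijl} u^i u^j ξ^l + ξ^k_{|j} F^j
  + u^i u^j (Tξ)^k_{i|j} + (£_ξ F)^k`, where `F^k := u^i u^k_{|i}`. -/
theorem deviation_vanishing_bracket {n : ℕ} (hn : 0 < n)
    (Γ : Fin n → Fin n → Fin n → (Fin n → ℝ) → ℝ)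
    (u ξ : Fin n → (Fin n → ℝ) → ℝ)
    (hΓ : ∀ k i j, ContDiff ℝ (⊤ : ℕ∞) (Γ k i j))
    (hu : ∀ k, ContDiff ℝ (⊤ : ℕ∞) (u k))
    (hξ : ∀ k, ContDiff ℝ (⊤ : ℕ∞) (ξ k))
    (hlie : ∀ (x : Fin n → ℝ) (k : Fin n), lieV ξ u k x = 0) :
    ∀ (x : Fin n → ℝ) (k : Fin n),
      (∑ j, u j x * covV Γ (fun k y => ∑ i, u i y * covV Γ ξ k i y) k j x) =
        (∑ i, ∑ j, ∑ l, curv Γ k i j l x * u i x * u j x * ξ l x)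
          + (∑ j, covV Γ ξ k j x * (∑ i, u i x * covV Γ u j i x))
          + (∑ i, ∑ j, u i x * u j x *
              covT Γ (fun k i y => ∑ l, tor Γ k i l y * ξ l y) k i j x)
          + lieV ξ (fun k y => ∑ i, u i y * covV Γ u k i y) k x := by
  intro x k
  rw [stepLeib Γ u ξ hΓ hu hξ x k]
  have hBB : ∑ i, ∑ j, u i x * u j x * covT Γ (fun a b y => covV Γ ξ a b y) k i j x
      = ∑ i, ∑ j, u i x * u j x * lieC ξ Γ k i j x
        + ∑ i, ∑ j, ∑ l, curv Γ k i j l x * u i x * u j x * ξ l x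
        + ∑ i, ∑ j, u i x * u j x *
            covT Γ (fun a b y => ∑ l, tor Γ a b l y * ξ l y) k i j x := by
    have e : ∀ i j : Fin n,
        u i x * u j x * covT Γ (fun a b y => covV Γ ξ a b y) k i j x
          = u i x * u j x * lieC ξ Γ k i j x
            + (∑ l, curv Γ k i j l x * u i x * u j x * ξ l x)
            + u i x * u j x *
                covT Γ (fun a b y => ∑ l, tor Γ a b l y * ξ l y) k i j x := by
      intro i j
      rw [stepB Γ ξ hΓ hξ x k i j, mul_add, mul_add]
      have e2 : u i x * u j x * (∑ l, curv Γ k i j l x * ξ l x)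
          = ∑ l, curv Γ k i j l x * u i x * u j x * ξ l x := by
        rw [Finset.mul_sum]; exact congr1' _ _ fun l => by ring
      rw [e2]
    calc ∑ i, ∑ j, u i x * u j x * covT Γ (fun a b y => covV Γ ξ a b y) k i j x
        = ∑ i, ∑ j, (u i x * u j x * lieC ξ Γ k i j x
            + (∑ l, curv Γ k i j l x * u i x * u j x * ξ l x)
            + u i x * u j x *
                covT Γ (fun a b y => ∑ l, tor Γ a b l y * ξ l y) k i j x) :=
          congr2' _ _ e
      _ = _ := by simp only [Finset.sum_add_distrib]
  rw [hBB, stepA Γ u ξ hΓ hu hξ hlie x k]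
  ring
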